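/- Let s : Fin p → Fin p → ℝ be an arbitrary similarity matrix and λ ∈ ℝ, and define the shifted similarity s_λ by s_λ(i,j) = s(i,j) + λ if i = j and s_λ(i,j) = s(i,j) otherwise. For disjoint nonempty finite subsets C, C' of Fin p, define the Ward linkage associated with a similarity s by δ_s(C,C') = S_s(C)/|C| + S_s(C')/|C'| − S_s(C ∪ C')/(|C|+|C'|), where S_s(C) = ∑_{(i,j)∈C×C} s(i,j). Then δ_{s_λ}(C,C') = δ_s(C,C') + λ. -/

import Mathlib

open Finset

/-- The similarity sum `S_s(C) = ∑_{(i,j)∈C×C} s(i,j)`. -/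
def simSum {p : ℕ} (s : Fin p → Fin p → ℝ) (C : Finset (Fin p)) : ℝ :=
  ∑ i ∈ C, ∑ j ∈ C, s i j

/-- The Ward linkage associated with the similarity `s`:
`δ_s(C,C') = S_s(C)/|C| + S_s(C')/|C'| − S_s(C ∪ C')/(|C|+|C'|)`. -/
noncomputable def wardS {p : ℕ} (s : Fin p → Fin p → ℝ) (C C' : Finset (Fin p)) : ℝ :=
  simSum s C / C.card + simSum s C' / C'.card
    - simSum s (C ∪ C') / (C.card + C'.card)

/-- The shifted similarity `s_λ`, with `s_λ(i,i) = s(i,i) + λ` and `s_λ(i,j) = s(i,j)` for `i ≠ j`. -/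
def shiftSim {p : ℕ} (s : Fin p → Fin p → ℝ) (lam : ℝ) : Fin p → Fin p → ℝ :=
  fun i j => if i = j then s i j + lam else s i j

lemma shiftSim_apply {p : ℕ} (s : Fin p → Fin p → ℝ) (lam : ℝ) (i j : Fin p) :
    shiftSim s lam i j = s i j + if i = j then lam else 0 := by
  by_cases h : i = j <;> simp [shiftSim, h]

lemma simSum_shiftSim {p : ℕ} (s : Fin p → Fin p → ℝ) (lam : ℝ) (C : Finset (Fin p)) :
    simSum (shiftSim s lam) C = simSum s C + #C * lam := by
  simp [simSum, shiftSim_apply, sum_add_distrib, mul_comm]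

lemma simSum_shiftSim_div_card {p : ℕ} (s : Fin p → Fin p → ℝ) (lam : ℝ)
    {C : Finset (Fin p)} (hC : C.Nonempty) :
    simSum (shiftSim s lam) C / #C = simSum s C / #C + lam := by
  have hcard : (#C : ℝ) ≠ 0 := by exact_mod_cast hC.card_pos.ne'
  rw [simSum_shiftSim, add_div, mul_div_cancel_left₀ lam hcard]

/-- Shifting the diagonal of the similarity by `λ` shifts Ward's linkage by `λ`:
`δ_{s_λ}(C,C') = δ_s(C,C') + λ`. -/
theorem wardS_shiftSim {p : ℕ} (s : Fin p → Fin p → ℝ) (lam : ℝ)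
    (C C' : Finset (Fin p)) (hC : C.Nonempty) (hC' : C'.Nonempty)
    (hdisj : Disjoint C C') :
    wardS (shiftSim s lam) C C' = wardS s C C' + lam := by
  rw [wardS, wardS, ← Nat.cast_add, ← card_union_of_disjoint hdisj,
    simSum_shiftSim_div_card s lam hC, simSum_shiftSim_div_card s lam hC',
    simSum_shiftSim_div_card s lam (hC.mono subset_union_left)]
  ring
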